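/- The graph G = G(Q,S) is connected and has diameter at most 4, i.e., every two vertices of G are at distance at most 4 from each other. -/

import Mathlib

/-- Raw vertex names for the graph `G(Q,S)`: elements `q_i`, hyperedges `S_j`,
copies `S_j'`, subdivision vertices `q^i_j`, and special vertices `q*`, `u₁`, `u₂`, `v`, `w`. -/
inductive HVertex (m n : ℕ) : Type
  | elt : Fin m → HVertex m n
  | hyp : Fin n → HVertex m n
  | copy : Fin n → HVertex m n
  | sub : Fin m → Fin n → HVertex m n
  | qstar : HVertex m n
  | u1 : HVertex m n
  | u2 : HVertex m n
  | v : HVertex m n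
  | w : HVertex m n

/-- A raw vertex name is an actual vertex of `G(Q,S)`: the subdivision vertex `q^i_j`
exists only when `q_i ∈ S_j`. -/
def HVertex.OK {m n : ℕ} (S : Fin n → Set (Fin m)) : HVertex m n → Prop
  | .sub i j => i ∈ S j
  | _ => True

/-- The vertex set of `G(Q,S)`. -/
def GVertex {m n : ℕ} (S : Fin n → Set (Fin m)) : Type := {x : HVertex m n // x.OK S}

/-- The (asymmetrically listed) edges of `G(Q,S)`:
`q^i_j q_i`, `q^i_j S_j`, `q_i S_j'` (for `q_i ∈ S_j`), `S_j S_k'` (all `j,k`),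
`q* u₁`, `q* u₂`, `q* q^i_j`, `u₁ S_j`, `u₂ S_j`, `u₁ v`, `u₂ v`, `w S_j'`. -/
def baseAdj {m n : ℕ} (S : Fin n → Set (Fin m)) : HVertex m n → HVertex m n → Prop
  | .sub i _, .elt i' => i = i'
  | .sub _ j, .hyp j' => j = j'
  | .elt i, .copy j => i ∈ S j
  | .hyp _, .copy _ => True
  | .qstar, .u1 => True
  | .qstar, .u2 => True
  | .qstar, .sub _ _ => True
  | .u1, .hyp _ => True
  | .u2, .hyp _ => True
  | .u1, .v => True
  | .u2, .v => True
  | .w, .copy _ => True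
  | _, _ => False

/-- The graph `G = G(Q,S)`. -/
def GQS {m n : ℕ} (S : Fin n → Set (Fin m)) : SimpleGraph (GVertex S) :=
  SimpleGraph.fromRel (fun a b => baseAdj S a.1 b.1)

theorem SimpleGraph.connected_and_dist_le_of_exists_walk {V : Type*} [Nonempty V]
    {G : SimpleGraph V} {k : ℕ} (h : ∀ a b, ∃ p : G.Walk a b, p.length ≤ k) :
    G.Connected ∧ ∀ a b, G.dist a b ≤ k := by
  refine ⟨⟨fun a b => ?_⟩, fun a b => ?_⟩
  · obtain ⟨p, -⟩ := h a b
    exact p.reachable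
  · obtain ⟨p, hp⟩ := h a b
    exact (SimpleGraph.dist_le p).trans hp

namespace GVertex

variable {m n : ℕ} {S : Fin n → Set (Fin m)}

def elt (i : Fin m) : GVertex S := ⟨.elt i, trivial⟩
def hyp (j : Fin n) : GVertex S := ⟨.hyp j, trivial⟩
def copy (j : Fin n) : GVertex S := ⟨.copy j, trivial⟩
def sub (i : Fin m) (j : Fin n) (h : i ∈ S j) : GVertex S := ⟨.sub i j, h⟩
def qstar : GVertex S := ⟨.qstar, trivial⟩
def u1 : GVertex S := ⟨.u1, trivial⟩
def u2 : GVertex S := ⟨.u2, trivial⟩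
def v : GVertex S := ⟨.v, trivial⟩
def w : GVertex S := ⟨.w, trivial⟩

end GVertex

namespace GQS

open GVertex SimpleGraph

variable {m n : ℕ} {S : Fin n → Set (Fin m)}

theorem adj_of_baseAdj {a b : GVertex S} (hne : a.1 ≠ b.1) (h : baseAdj S a.1 b.1) :
    (GQS S).Adj a b :=
  ⟨fun e => hne (congrArg Subtype.val e), Or.inl h⟩

theorem adj_sub_elt {i j} (h : i ∈ S j) : (GQS S).Adj (sub i j h) (elt i) :=
  adj_of_baseAdj nofun rfl
theorem adj_sub_hyp {i j} (h : i ∈ S j) : (GQS S).Adj (sub i j h) (hyp j) :=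
  adj_of_baseAdj nofun rfl
theorem adj_elt_copy {i j} (h : i ∈ S j) : (GQS S).Adj (elt i) (copy j) :=
  adj_of_baseAdj nofun h
theorem adj_hyp_copy {j k : Fin n} : (GQS S).Adj (hyp j) (copy k) :=
  adj_of_baseAdj nofun trivial
theorem adj_qstar_u1 : (GQS S).Adj qstar u1 := adj_of_baseAdj nofun trivial
theorem adj_qstar_u2 : (GQS S).Adj qstar u2 := adj_of_baseAdj nofun trivial
theorem adj_qstar_sub {i j} (h : i ∈ S j) : (GQS S).Adj qstar (sub i j h) :=
  adj_of_baseAdj nofun trivial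
theorem adj_u1_hyp {j : Fin n} : (GQS S).Adj u1 (hyp j) := adj_of_baseAdj nofun trivial
theorem adj_u2_hyp {j : Fin n} : (GQS S).Adj u2 (hyp j) := adj_of_baseAdj nofun trivial
theorem adj_u1_v : (GQS S).Adj u1 v := adj_of_baseAdj nofun trivial
theorem adj_u2_v : (GQS S).Adj u2 v := adj_of_baseAdj nofun trivial
theorem adj_w_copy {j : Fin n} : (GQS S).Adj w (copy j) := adj_of_baseAdj nofun trivial

section FullHyperedge

variable {N : Fin n}

theorem exists_walk_u1_length_le_three (hN : ∀ i, i ∈ S N) :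
    ∀ b : GVertex S, ∃ p : (GQS S).Walk u1 b, p.length ≤ 3
  | ⟨.elt i, _⟩ =>
    ⟨.cons adj_u1_hyp (.cons (adj_sub_hyp (hN i)).symm (.cons (adj_sub_elt (hN i)) .nil)),
      le_rfl⟩
  | ⟨.hyp _, _⟩ => ⟨.cons adj_u1_hyp .nil, show 1 ≤ 3 by omega⟩
  | ⟨.copy _, _⟩ =>
    ⟨.cons (adj_u1_hyp (j := N)) (.cons adj_hyp_copy .nil), show 2 ≤ 3 by omega⟩
  | ⟨.sub _ _, h⟩ =>
    ⟨.cons adj_u1_hyp (.cons (adj_sub_hyp h).symm .nil), show 2 ≤ 3 by omega⟩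
  | ⟨.qstar, _⟩ => ⟨.cons adj_qstar_u1.symm .nil, show 1 ≤ 3 by omega⟩
  | ⟨.u1, _⟩ => ⟨.nil, show 0 ≤ 3 by omega⟩
  | ⟨.u2, _⟩ => ⟨.cons adj_u1_v (.cons adj_u2_v.symm .nil), show 2 ≤ 3 by omega⟩
  | ⟨.v, _⟩ => ⟨.cons adj_u1_v .nil, show 1 ≤ 3 by omega⟩
  | ⟨.w, _⟩ =>
    ⟨.cons (adj_u1_hyp (j := N)) (.cons (adj_hyp_copy (k := N)) (.cons adj_w_copy.symm .nil)),
      le_rfl⟩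

theorem exists_walk_copy_length_le_two (hN : ∀ i, i ∈ S N) (a : GVertex S) (hq : a ≠ qstar)
    (hv : a ≠ v) :
    ∃ p : (GQS S).Walk a (copy N), p.length ≤ 2 :=
  match a, hq, hv with
  | ⟨.elt i, _⟩, _, _ => ⟨.cons (adj_elt_copy (hN i)) .nil, show 1 ≤ 2 by omega⟩
  | ⟨.hyp _, _⟩, _, _ => ⟨.cons adj_hyp_copy .nil, show 1 ≤ 2 by omega⟩
  | ⟨.copy _, _⟩, _, _ =>
    ⟨.cons (adj_hyp_copy (j := N)).symm (.cons adj_hyp_copy .nil), le_rfl⟩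
  | ⟨.sub _ _, h⟩, _, _ => ⟨.cons (adj_sub_hyp h) (.cons adj_hyp_copy .nil), le_rfl⟩
  | ⟨.u1, _⟩, _, _ => ⟨.cons (adj_u1_hyp (j := N)) (.cons adj_hyp_copy .nil), le_rfl⟩
  | ⟨.u2, _⟩, _, _ => ⟨.cons (adj_u2_hyp (j := N)) (.cons adj_hyp_copy .nil), le_rfl⟩
  | ⟨.w, _⟩, _, _ => ⟨.cons adj_w_copy .nil, show 1 ≤ 2 by omega⟩
  | ⟨.qstar, _⟩, hq, _ => absurd rfl hq
  | ⟨.v, _⟩, _, hv => absurd rfl hv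

/-- Every vertex but `q*` and `v` lies within distance `2` of `S_N'`, and `q*`, `v` are
neighbours of `u₁`, which is within distance `3` of every vertex. -/
theorem exists_walk_length_le_four (hN : ∀ i, i ∈ S N) (a b : GVertex S) :
    ∃ p : (GQS S).Walk a b, p.length ≤ 4 := by
  have near_u1 : ∀ x : GVertex S, x = qstar ∨ x = v →
      ∃ p : (GQS S).Walk x u1, p.length ≤ 1 := by
    rintro x (rfl | rfl)
    exacts [⟨.cons adj_qstar_u1 .nil, le_rfl⟩, ⟨.cons adj_u1_v.symm .nil, le_rfl⟩]
  by_cases ha : a = qstar ∨ a = v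
  · obtain ⟨p, hp⟩ := near_u1 a ha
    obtain ⟨q, hq⟩ := exists_walk_u1_length_le_three hN b
    exact ⟨p.append q, by rw [Walk.length_append]; omega⟩
  by_cases hb : b = qstar ∨ b = v
  · obtain ⟨p, hp⟩ := near_u1 b hb
    obtain ⟨q, hq⟩ := exists_walk_u1_length_le_three hN a
    exact ⟨(p.append q).reverse, by rw [Walk.length_reverse, Walk.length_append]; omega⟩
  rw [not_or] at ha hb
  obtain ⟨p, hp⟩ := exists_walk_copy_length_le_two hN a ha.1 ha.2
  obtain ⟨q, hq⟩ := exists_walk_copy_length_le_two hN b hb.1 hb.2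
  exact ⟨p.append q.reverse, by rw [Walk.length_append, Walk.length_reverse]; omega⟩

end FullHyperedge

end GQS

theorem stmt_7 {m n : ℕ} (S : Fin n → Set (Fin m)) (hn : 2 ≤ n)
    (hSlast : S ⟨n - 1, by omega⟩ = Set.univ) :
    (GQS S).Connected ∧ ∀ a b : GVertex S, (GQS S).dist a b ≤ 4 := by
  have : Nonempty (GVertex S) := ⟨GVertex.u1⟩
  exact SimpleGraph.connected_and_dist_le_of_exists_walk
    (GQS.exists_walk_length_le_four fun i => hSlast ▸ Set.mem_univ i)
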